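/- Let G be a finite simple 4-critical graph with no (7,2)-colouute, and let v be a vertex of G with neighbourhood N(v) = {x, y, z}. Then for every pair of distinct vertices w, t ∈ {x, y, z}, either wt ∈ E(G) or there exists a vertex different from v adjacent to both w and t. Moreover, one can choose for each non-adjacent pair {w, t} ⊆ {x, y, z} a common neighbour of w and t different from v in such a way that distinct non-adjacent pairs receive distinct common neighbours. -/

import Mathlib

open SimpleGraph

/-- The circular clique `G_{p,q}` on vertex set `ZMod p`. -/
def circClique (p q : ℕ) : SimpleGraph (ZMod p) where
  Adj i j := i ≠ j ∧ (q ≤ (i - j).val ∧ (i - j).val ≤ p - q)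
    ∧ (q ≤ (j - i).val ∧ (j - i).val ≤ p - q)
  symm := ⟨fun _ _ ⟨h, h1, h2⟩ => ⟨h.symm, h2, h1⟩⟩
  loopless := ⟨fun _ h => h.1 rfl⟩

/-- `G` admits a `(p,q)`-circular colouring. -/
def HasCircColoring {V : Type*} (G : SimpleGraph V) (p q : ℕ) : Prop :=
  Nonempty (G →g circClique p q)

/-- A graph is 4-critical. -/
def FourCritical {V : Type*} (G : SimpleGraph V) : Prop :=
  ¬ G.Colorable 3 ∧ ∀ e ∈ G.edgeSet, (G.deleteEdges {e}).Colorable 3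

/-- The wheel on `n` vertices: a cycle on `n-1` vertices plus a hub. -/
def wheel (n : ℕ) : SimpleGraph (Option (Fin (n - 1))) where
  Adj u v := match u, v with
    | none, none => False
    | none, some _ => True
    | some _, none => True
    | some i, some j => (cycleGraph (n - 1)).Adj i j
  symm := ⟨by rintro (_|i) (_|j) h <;> simp_all <;> exact h.symm⟩
  loopless := ⟨by rintro (_|i) h <;> simp_all⟩

/-!
Delete an edge `va` at the degree-3 vertex `v` and 3-colour what is left. By criticality every
colour occurs on a neighbour of `v` (a missing colour could be given to `v`), so the neighbours
`a, b, c` get three distinct colours, and no `u ≠ v` is adjacent to all of them (the colour of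
`u` occurs on one of them).

If two neighbours `a, b` of `v` had no common neighbour besides `v`, sending the colour classes
to `0, 2, 4` in `G_{7,2}` and then moving `a ↦ 6`, `v ↦ 1`, `b ↦ 3` and the colour-`2`
neighbours of `b` to `5` would give a `(7,2)`-colouring: the only edges this could break join
`a` to a common neighbour of `a` and `b`.
-/

instance (p q : ℕ) : DecidableRel (circClique p q).Adj := fun _ _ => by
  unfold circClique; infer_instance

theorem Fin.exists_perm_eq_zero_one_two {i j k : Fin 3} (h : ∀ m, m = i ∨ m = j ∨ m = k) :
    ∃ σ : Equiv.Perm (Fin 3), σ i = 0 ∧ σ j = 1 ∧ σ k = 2 := by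
  revert i j k; decide

theorem Fin.eq_zero_or_eq_one_or_eq_two (i : Fin 3) : i = 0 ∨ i = 1 ∨ i = 2 := by
  fin_cases i <;> simp

theorem Set.exists_triple_eq_insert_insert {V : Type*} {x y z w t : V}
    (hw : w ∈ ({x, y, z} : Set V)) (ht : t ∈ ({x, y, z} : Set V)) (hwt : w ≠ t) :
    ∃ c, ({x, y, z} : Set V) = {w, t, c} := by
  simp only [Set.mem_insert_iff, Set.mem_singleton_iff] at hw ht
  rcases hw with rfl | rfl | rfl <;> rcases ht with rfl | rfl | rfl <;> first
    | exact absurd rfl hwt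
    | exact ⟨x, by ext; grind⟩
    | exact ⟨y, by ext; grind⟩
    | exact ⟨z, by ext; grind⟩

theorem Set.triple_subset_of_sym2_ne {V : Type*} {x y z w t w' t' : V}
    (hw : w ∈ ({x, y, z} : Set V)) (ht : t ∈ ({x, y, z} : Set V))
    (hw' : w' ∈ ({x, y, z} : Set V)) (ht' : t' ∈ ({x, y, z} : Set V))
    (hwt : w ≠ t) (hwt' : w' ≠ t') (hne : s(w, t) ≠ s(w', t')) :
    ({x, y, z} : Set V) ⊆ {w, t, w', t'} := by
  simp only [Set.mem_insert_iff, Set.mem_singleton_iff] at hw ht hw' ht'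
  rw [Ne, Sym2.eq_iff] at hne
  intro r hr
  simp only [Set.mem_insert_iff, Set.mem_singleton_iff] at hr ⊢
  grind

def sevenTwoBlock : ZMod 7 → Fin 3 := ![0, 0, 1, 1, 2, 2, 0]

theorem sevenTwoBlock_apply_vecCons (i : Fin 3) : sevenTwoBlock (![0, 2, 4] i) = i := by
  revert i; decide

theorem circClique_seven_two_adj_of_sevenTwoBlock_ne {i j : ZMod 7} (hi : i ≠ 1) (hj : j ≠ 1)
    (hij : sevenTwoBlock i ≠ sevenTwoBlock j) :
    (circClique 7 2).Adj i j ∨ s(i, j) = s(3, 4) ∨ s(i, j) = s(5, 6) := by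
  revert i j; decide

theorem circClique_seven_two_one_adj {j : ZMod 7} (hj : j ∈ ({3, 4, 5, 6} : Set (ZMod 7))) :
    (circClique 7 2).Adj 1 j := by
  simp only [Set.mem_insert_iff, Set.mem_singleton_iff] at hj
  rcases hj with rfl | rfl | rfl | rfl <;> decide

namespace FourCritical

variable {V : Type*} {G : SimpleGraph V}

theorem exists_adj_color_eq (hG : FourCritical G) {v a : V}
    (C : (G.deleteEdges {s(v, a)}).Coloring (Fin 3)) (k : Fin 3) :
    ∃ q, G.Adj v q ∧ C q = k := by
  classical
  by_contra! hk
  refine hG.1 ⟨Coloring.mk (Function.update C v k) fun {p q} hpq => ?_⟩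
  by_cases hp : p = v
  · subst hp
    rw [Function.update_self, Function.update_of_ne (G.ne_of_adj hpq).symm]
    exact (hk q hpq).symm
  by_cases hq : q = v
  · subst hq
    rw [Function.update_self, Function.update_of_ne hp]
    exact hk p hpq.symm
  rw [Function.update_of_ne hp, Function.update_of_ne hq]
  exact C.valid (deleteEdges_adj.2 ⟨hpq, by simp [hp, hq]⟩)

theorem not_neighborSet_subset (hG : FourCritical G) {u v a : V} (hva : G.Adj v a)
    (huv : u ≠ v) : ¬ G.neighborSet v ⊆ G.neighborSet u := by
  intro hsub
  obtain ⟨C⟩ := hG.2 s(v, a) hva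
  obtain ⟨q, hvq, hq⟩ := hG.exists_adj_color_eq C (C u)
  refine C.valid (deleteEdges_adj.2 ⟨hsub hvq, ?_⟩) hq.symm
  simp [huv, (G.ne_of_adj hvq).symm]

theorem exists_coloring_of_neighborSet_eq (hG : FourCritical G) {v a b c : V}
    (hN : G.neighborSet v = {a, b, c}) :
    ∃ C : (G.deleteEdges {s(v, a)}).Coloring (Fin 3), C a = 0 ∧ C b = 1 ∧ C c = 2 := by
  have hva : G.Adj v a := by simp [← mem_neighborSet, hN]
  obtain ⟨C⟩ := hG.2 s(v, a) hva
  have hcover : ∀ k, k = C a ∨ k = C b ∨ k = C c := by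
    intro k
    obtain ⟨q, hvq, rfl⟩ := hG.exists_adj_color_eq C k
    have hq : q ∈ ({a, b, c} : Set V) := hN ▸ hvq
    rcases hq with rfl | rfl | rfl <;> simp
  obtain ⟨σ, hσ⟩ := Fin.exists_perm_eq_zero_one_two hcover
  exact ⟨Coloring.mk (σ ∘ C) fun h => σ.injective.ne (C.valid h), hσ⟩

end FourCritical

section SevenTwo

variable {V : Type*} (G : SimpleGraph V) (v a b : V) (C : V → Fin 3)

open Classical in
noncomputable def sevenTwoMap (p : V) : ZMod 7 :=
  if p = v then 1 else if p = a then 6 else if p = b then 3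
  else if C p = 2 ∧ G.Adj p b then 5 else ![0, 2, 4] (C p)

variable {G v a b C}

theorem sevenTwoMap_self : sevenTwoMap G v a b C v = 1 := by
  simp [sevenTwoMap]

theorem sevenTwoMap_ne_one {p : V} (hp : p ≠ v) : sevenTwoMap G v a b C p ≠ 1 := by
  unfold sevenTwoMap
  rcases Fin.eq_zero_or_eq_one_or_eq_two (C p) with h | h | h <;>
    split_ifs <;> simp_all +decide

theorem sevenTwoBlock_sevenTwoMap {p : V} (hp : p ≠ v) (ha : C a = 0) (hb : C b = 1) :
    sevenTwoBlock (sevenTwoMap G v a b C p) = C p := by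
  unfold sevenTwoMap
  rcases Fin.eq_zero_or_eq_one_or_eq_two (C p) with h | h | h <;>
    split_ifs <;> simp_all +decide

theorem sevenTwoMap_mem_of_ne {q : V} (hq : q ≠ v) (hC : q = a ∨ q = b ∨ C q = 2) :
    sevenTwoMap G v a b C q ∈ ({3, 4, 5, 6} : Set (ZMod 7)) := by
  unfold sevenTwoMap
  rcases Fin.eq_zero_or_eq_one_or_eq_two (C q) with h | h | h <;>
    split_ifs <;> simp_all +decide

theorem eq_of_sevenTwoMap_eq_three {p : V} (hp : sevenTwoMap G v a b C p = 3) : p = b := by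
  unfold sevenTwoMap at hp
  rcases Fin.eq_zero_or_eq_one_or_eq_two (C p) with h | h | h <;>
    split_ifs at hp <;> simp_all +decide

theorem not_adj_of_sevenTwoMap_eq_four {p : V} (hp : sevenTwoMap G v a b C p = 4) :
    ¬ G.Adj p b := by
  unfold sevenTwoMap at hp
  rcases Fin.eq_zero_or_eq_one_or_eq_two (C p) with h | h | h <;>
    split_ifs at hp <;> simp_all +decide

theorem adj_of_sevenTwoMap_eq_five {p : V} (hp : sevenTwoMap G v a b C p = 5) : G.Adj p b := by
  unfold sevenTwoMap at hp
  rcases Fin.eq_zero_or_eq_one_or_eq_two (C p) with h | h | h <;>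
    split_ifs at hp <;> simp_all +decide

theorem eq_of_sevenTwoMap_eq_six {p : V} (hp : sevenTwoMap G v a b C p = 6) : p = a := by
  unfold sevenTwoMap at hp
  rcases Fin.eq_zero_or_eq_one_or_eq_two (C p) with h | h | h <;>
    split_ifs at hp <;> simp_all +decide

theorem hasCircColoring_seven_two {c : V} (hN : G.neighborSet v = {a, b, c})
    (C : (G.deleteEdges {s(v, a)}).Coloring (Fin 3)) (ha : C a = 0) (hb : C b = 1) (hc : C c = 2)
    (hcom : ∀ u, u ≠ v → G.Adj u a → ¬ G.Adj u b) :
    HasCircColoring G 7 2 := by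
  set φ := sevenTwoMap G v a b C
  have hub : ∀ {q}, G.Adj v q → (circClique 7 2).Adj (φ v) (φ q) := by
    intro q hvq
    have hq : q ∈ ({a, b, c} : Set V) := hN ▸ hvq
    rw [show φ v = 1 from sevenTwoMap_self]
    refine circClique_seven_two_one_adj (sevenTwoMap_mem_of_ne (G.ne_of_adj hvq).symm ?_)
    rcases hq with rfl | rfl | rfl <;> simp [hc]
  have no_three_four : ∀ {p q}, G.Adj p q → ¬ (φ p = 3 ∧ φ q = 4) := by
    rintro p q hpq ⟨hp, hq⟩
    exact not_adj_of_sevenTwoMap_eq_four hq (eq_of_sevenTwoMap_eq_three hp ▸ hpq.symm)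
  have no_five_six : ∀ {p q}, G.Adj p q → p ≠ v → ¬ (φ p = 5 ∧ φ q = 6) := by
    rintro p q hpq hpv ⟨hp, hq⟩
    exact hcom p hpv (eq_of_sevenTwoMap_eq_six hq ▸ hpq) (adj_of_sevenTwoMap_eq_five hp)
  refine ⟨⟨φ, fun {p q} hpq => ?_⟩⟩
  by_cases hp : p = v
  · subst hp; exact hub hpq
  by_cases hq : q = v
  · subst hq; exact (hub hpq.symm).symm
  have hCpq : C p ≠ C q := C.valid (deleteEdges_adj.2 ⟨hpq, by simp [hp, hq]⟩)
  rw [← sevenTwoBlock_sevenTwoMap hp ha hb, ← sevenTwoBlock_sevenTwoMap hq ha hb] at hCpq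
  rcases circClique_seven_two_adj_of_sevenTwoBlock_ne (sevenTwoMap_ne_one hp)
    (sevenTwoMap_ne_one hq) hCpq with h | h | h
  · exact h
  · rcases Sym2.eq_iff.1 h with h | h
    exacts [absurd h (no_three_four hpq), absurd h.symm (no_three_four hpq.symm)]
  · rcases Sym2.eq_iff.1 h with h | h
    exacts [absurd h (no_five_six hpq hp), absurd h.symm (no_five_six hpq.symm hq)]

end SevenTwo

theorem FourCritical.exists_common_neighbor {V : Type*} {G : SimpleGraph V} (hG : FourCritical G)
    (hno : ¬ HasCircColoring G 7 2) {v a b c : V} (hN : G.neighborSet v = {a, b, c}) :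
    ∃ u, u ≠ v ∧ G.Adj u a ∧ G.Adj u b := by
  by_contra! hcom
  obtain ⟨C, ha, hb, hc⟩ := hG.exists_coloring_of_neighborSet_eq hN
  exact hno (hasCircColoring_seven_two hN C ha hb hc hcom)

theorem stmt_15_general {V : Type*} (G : SimpleGraph V)
    (hcrit : FourCritical G) (hno : ¬ HasCircColoring G 7 2)
    (v x y z : V)
    (hN : G.neighborSet v = {x, y, z}) :
    (∀ w t : V, w ∈ ({x, y, z} : Set V) → t ∈ ({x, y, z} : Set V) → w ≠ t →
      G.Adj w t ∨ ∃ u : V, u ≠ v ∧ G.Adj u w ∧ G.Adj u t) ∧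
    ∃ g : Sym2 V → V,
      (∀ w t : V, w ∈ ({x, y, z} : Set V) → t ∈ ({x, y, z} : Set V) → w ≠ t →
        ¬ G.Adj w t →
        g s(w, t) ≠ v ∧ G.Adj (g s(w, t)) w ∧ G.Adj (g s(w, t)) t) ∧
      (∀ w t w' t' : V, w ∈ ({x, y, z} : Set V) → t ∈ ({x, y, z} : Set V) →
        w' ∈ ({x, y, z} : Set V) → t' ∈ ({x, y, z} : Set V) →
        w ≠ t → w' ≠ t' → ¬ G.Adj w t → ¬ G.Adj w' t' → s(w, t) ≠ s(w', t') →
        g s(w, t) ≠ g s(w', t')) := by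
  have hcommon : ∀ w t, w ∈ ({x, y, z} : Set V) → t ∈ ({x, y, z} : Set V) → w ≠ t →
      ∃ u, u ≠ v ∧ G.Adj u w ∧ G.Adj u t := by
    intro w t hw ht hwt
    obtain ⟨c, hc⟩ := Set.exists_triple_eq_insert_insert hw ht hwt
    exact hcrit.exists_common_neighbor hno (hN.trans hc)
  have : Nonempty V := ⟨v⟩
  let g : Sym2 V → V := fun e => Classical.epsilon fun u => u ≠ v ∧ ∀ r ∈ e, G.Adj u r
  have hg : ∀ w t, w ∈ ({x, y, z} : Set V) → t ∈ ({x, y, z} : Set V) → w ≠ t →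
      g s(w, t) ≠ v ∧ G.Adj (g s(w, t)) w ∧ G.Adj (g s(w, t)) t := by
    intro w t hw ht hwt
    obtain ⟨u, huv, huw, hut⟩ := hcommon w t hw ht hwt
    have hspec := Classical.epsilon_spec (p := fun u => u ≠ v ∧ ∀ r ∈ s(w, t), G.Adj u r)
      ⟨u, huv, Sym2.forall_mem_pair.2 ⟨huw, hut⟩⟩
    exact ⟨hspec.1, Sym2.forall_mem_pair.1 hspec.2⟩
  refine ⟨fun w t hw ht hwt => .inr (hcommon w t hw ht hwt),
    g, fun w t hw ht hwt _ => hg w t hw ht hwt, ?_⟩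
  intro w t w' t' hw ht hw' ht' hwt hwt' _ _ hne heq
  obtain ⟨hgv, hgw, hgt⟩ := hg w t hw ht hwt
  obtain ⟨-, hgw', hgt'⟩ := hg w' t' hw' ht' hwt'
  have hvx : G.Adj v x := by simp [← mem_neighborSet, hN]
  refine hcrit.not_neighborSet_subset hvx hgv ?_
  rw [hN]
  refine (Set.triple_subset_of_sym2_ne hw ht hw' ht' hwt hwt' hne).trans ?_
  rintro r (rfl | rfl | rfl | rfl)
  exacts [hgw, hgt, heq ▸ hgw', heq ▸ hgt']

/-- Around a degree-3 vertex `v` with neighbours `x,y,z` in a 4-critical graph with no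
(7,2)-colouring: each non-adjacent pair among `{x,y,z}` has a common neighbour other
than `v`, and such common neighbours can be chosen distinct for distinct pairs. -/
theorem stmt_15 {V : Type*} [Fintype V] (G : SimpleGraph V) [DecidableRel G.Adj]
    (hcrit : FourCritical G) (hno : ¬ HasCircColoring G 7 2)
    (v x y z : V) (hxy : x ≠ y) (hxz : x ≠ z) (hyz : y ≠ z)
    (hN : G.neighborSet v = {x, y, z}) :
    (∀ w t : V, w ∈ ({x, y, z} : Set V) → t ∈ ({x, y, z} : Set V) → w ≠ t →
      G.Adj w t ∨ ∃ u : V, u ≠ v ∧ G.Adj u w ∧ G.Adj u t) ∧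
    ∃ g : Sym2 V → V,
      (∀ w t : V, w ∈ ({x, y, z} : Set V) → t ∈ ({x, y, z} : Set V) → w ≠ t →
        ¬ G.Adj w t →
        g s(w, t) ≠ v ∧ G.Adj (g s(w, t)) w ∧ G.Adj (g s(w, t)) t) ∧
      (∀ w t w' t' : V, w ∈ ({x, y, z} : Set V) → t ∈ ({x, y, z} : Set V) →
        w' ∈ ({x, y, z} : Set V) → t' ∈ ({x, y, z} : Set V) →
        w ≠ t → w' ≠ t' → ¬ G.Adj w t → ¬ G.Adj w' t' → s(w, t) ≠ s(w', t') →
        g s(w, t) ≠ g s(w', t')) :=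
  stmt_15_general G hcrit hno v x y z hN
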